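/- arXiv:2311.03178 — 2 statements merged into one kernel-verified Lean document; each statement's English description precedes it below -/
import Mathlib

section
/- Let φ: ℝ → ℝ with φ(x) = 1 + cos(2πx) for |x| ≤ 1/2 and φ(x) = 0 otherwise, and for τ > 0 let ψ_τ: ℝ → ℝ be defined by ψ_τ(x) = (1+τ)^{−1/2}[4π²(1+τ)(φ*φ)(x/√(1+τ)) + (φ*φ)''(x/√(1+τ))], where * denotes convolution. Then the Fourier transform of ψ_τ satisfies ψ̂_τ(v) = 4π²(1+τ)(1 − v²)·(φ̂(√(1+τ)·v))² for all v ∈ ℝ. -/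
open scoped FourierTransform Real

/-- The raised-cosine bump `φ(x) = 1 + cos(2πx)` on `[-1/2, 1/2]`, zero elsewhere. -/
noncomputable def raisedCos : ℝ → ℝ :=
  fun x => if |x| ≤ 1/2 then 1 + Real.cos (2 * π * x) else 0

/-- The autocorrelation `φ * φ` (convolution over ℝ with respect to Lebesgue measure). -/
noncomputable def raisedCosConv : ℝ → ℝ :=
  MeasureTheory.convolution raisedCos raisedCos (ContinuousLinearMap.lsmul ℝ ℝ)
    MeasureTheory.volume

/-- The univariate admissible function
`ψ_τ(x) = (1+τ)^{−1/2} [4π²(1+τ)(φ*φ)(x/√(1+τ)) + (φ*φ)''(x/√(1+τ))]`. -/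
noncomputable def psiAdm (τ : ℝ) : ℝ → ℝ := fun x =>
  (Real.sqrt (1 + τ))⁻¹ *
    (4 * π ^ 2 * (1 + τ) * raisedCosConv (x / Real.sqrt (1 + τ)) +
      deriv (deriv raisedCosConv) (x / Real.sqrt (1 + τ)))

/-! The bump `φ` is `C¹` with compact support: its derivative `-2π sin(2πx)` vanishes at `±1/2`.
Hence `(φ * φ)'' = φ' * φ'`, and the convolution theorem together with `𝓕(φ')(ξ) = 2πiξ 𝓕φ(ξ)`
gives `𝓕[c (φ * φ) + (φ * φ)''](ξ) = (c - 4π²ξ²) (𝓕φ(ξ))²`. The dilation `x ↦ x / √(1+τ)` and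
the prefactor `(1+τ)^{-1/2}` turn this into the value at `ξ = √(1+τ) v`, and with
`c = 4π²(1+τ)` the factor becomes `4π²(1+τ)(1 - v²)`. -/

open MeasureTheory Set Convolution Complex

theorem indicator_Icc_eq_zero_of_notMem_Ioo {M : Type*} [Zero M] {g : ℝ → M} {a b y : ℝ}
    (ha : g a = 0) (hb : g b = 0) (hy : y ∉ Ioo a b) : (Icc a b).indicator g y = 0 := by
  by_cases hyI : y ∈ Icc a b
  · obtain rfl | rfl : y = a ∨ y = b := by
      by_contra! h
      exact hy ⟨lt_of_le_of_ne hyI.1 h.1.symm, lt_of_le_of_ne hyI.2 h.2⟩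
    all_goals simp [hyI, ha, hb]
  · exact indicator_of_notMem hyI g

theorem hasDerivAt_indicator_Icc {E : Type*} [NormedAddCommGroup E] [NormedSpace ℝ E]
    {g g' : ℝ → E} {a b x : ℝ} (hg : HasDerivAt g (g' x) x) (ha : g a = 0)
    (hb : g b = 0) (ha' : g' a = 0) (hb' : g' b = 0) :
    HasDerivAt ((Icc a b).indicator g) ((Icc a b).indicator g' x) x := by
  by_cases hx : x ∈ Ioo a b
  · have hloc : (Icc a b).indicator g =ᶠ[nhds x] g :=
      Filter.eventually_of_mem (isOpen_Ioo.mem_nhds hx) fun y hy =>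
        indicator_of_mem (Ioo_subset_Icc_self hy) g
    rw [indicator_of_mem (Ioo_subset_Icc_self hx)]
    exact hg.congr_of_eventuallyEq hloc
  rw [indicator_Icc_eq_zero_of_notMem_Ioo ha' hb' hx, ← hasDerivWithinAt_univ,
    ← union_compl_self (Icc a b)]
  refine HasDerivWithinAt.union ?_ ?_
  · by_cases hxI : x ∈ Icc a b
    · have hg'x : g' x = 0 := by
        simpa [indicator_of_mem hxI] using indicator_Icc_eq_zero_of_notMem_Ioo ha' hb' hx
      exact (hg'x ▸ hg).hasDerivWithinAt.congr (fun y hy => indicator_of_mem hy g)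
        (indicator_of_mem hxI g)
    · exact HasFDerivWithinAt.of_notMem_closure (by rwa [closure_Icc])
  · exact (hasDerivWithinAt_const x _ 0).congr (fun y hy => indicator_of_notMem hy g)
      (indicator_Icc_eq_zero_of_notMem_Ioo ha hb hx)

theorem raisedCos_eq_indicator :
    raisedCos = (Icc (-(1/2)) (1/2)).indicator fun x => 1 + Real.cos (2 * π * x) := by
  ext x
  simp only [raisedCos, indicator_apply, mem_Icc, abs_le]

theorem hasDerivAt_raisedCos (x : ℝ) :
    HasDerivAt raisedCos
      ((Icc (-(1/2)) (1/2)).indicator (fun y => -(2 * π * Real.sin (2 * π * y))) x) x := by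
  have hcos : ∀ y : ℝ, HasDerivAt (fun y => 1 + Real.cos (2 * π * y))
      (-(2 * π * Real.sin (2 * π * y))) y := fun y => by
    simpa [mul_comm] using ((hasDerivAt_id y).const_mul (2 * π)).cos.const_add 1
  rw [raisedCos_eq_indicator]
  apply hasDerivAt_indicator_Icc (hcos x) <;> simp [mul_comm 2 π]

theorem deriv_raisedCos :
    deriv raisedCos = (Icc (-(1/2)) (1/2)).indicator fun y => -(2 * π * Real.sin (2 * π * y)) :=
  funext fun x => (hasDerivAt_raisedCos x).deriv

theorem contDiff_raisedCos : ContDiff ℝ 1 raisedCos := by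
  refine contDiff_one_iff_deriv.2 ⟨fun x => (hasDerivAt_raisedCos x).differentiableAt, ?_⟩
  rw [deriv_raisedCos]
  refine continuous_indicator ?_ (by fun_prop)
  rw [frontier_Icc (by norm_num)]
  rintro y (rfl | rfl) <;> simp [mul_comm 2 π]

theorem hasCompactSupport_raisedCos : HasCompactSupport raisedCos := by
  rw [raisedCos_eq_indicator]
  exact HasCompactSupport.intro isCompact_Icc fun x hx => indicator_of_notMem hx _

theorem deriv_deriv_convolution {E E' F : Type*} [NormedAddCommGroup E] [NormedSpace ℝ E]
    [NormedAddCommGroup E'] [NormedSpace ℝ E'] [NormedAddCommGroup F] [NormedSpace ℝ F]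
    (L : E →L[ℝ] E' →L[ℝ] F) {f : ℝ → E} {g : ℝ → E'}
    (hcf : HasCompactSupport f) (hf : ContDiff ℝ 1 f) (hcg : HasCompactSupport g)
    (hg : ContDiff ℝ 1 g) :
    deriv (deriv (f ⋆[L] g)) = deriv f ⋆[L] deriv g := by
  have hfg : deriv (f ⋆[L] g) = f ⋆[L] deriv g := funext fun x =>
    (hcg.hasDerivAt_convolution_right L hf.continuous.locallyIntegrable hg x).deriv
  rw [hfg]
  exact funext fun x =>
    (hcf.hasDerivAt_convolution_left L hf (hg.continuous_deriv le_rfl).locallyIntegrable x).deriv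

section Fourier

variable {V : Type*} [NormedAddCommGroup V] [InnerProductSpace ℝ V] [FiniteDimensional ℝ V]
  [MeasurableSpace V] [BorelSpace V]

theorem ofReal_convolution (f g : V → ℝ) (x : V) :
    (((f ⋆[ContinuousLinearMap.lsmul ℝ ℝ] g) x : ℝ) : ℂ) =
      ((fun y => (f y : ℂ)) ⋆[ContinuousLinearMap.mul ℂ ℂ] fun y => (g y : ℂ)) x := by
  rw [convolution_lsmul, convolution_mul, ← integral_complex_ofReal]
  simp only [smul_eq_mul, ofReal_mul]

theorem fourier_ofReal_convolution {f g : V → ℝ} (hf : Integrable f) (hg : Integrable g) (w : V) :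
    𝓕 (fun x => ((f ⋆[ContinuousLinearMap.lsmul ℝ ℝ] g) x : ℂ)) w =
      𝓕 (fun x => (f x : ℂ)) w * 𝓕 (fun x => (g x : ℂ)) w := by
  simp only [ofReal_convolution]
  exact Real.fourier_mul_convolution_eq hf.ofReal hg.ofReal w

theorem fourier_add_of_integrable {E : Type*} [NormedAddCommGroup E] [NormedSpace ℂ E]
    {f g : V → E} (hf : Integrable f) (hg : Integrable g) (w : V) :
    𝓕 (fun x => f x + g x) w = 𝓕 f w + 𝓕 g w := by
  simp only [Real.fourier_eq, smul_add]
  exact integral_add ((Real.fourierIntegral_convergent_iff w).2 hf)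
    ((Real.fourierIntegral_convergent_iff w).2 hg)

theorem fourier_const_mul (c : ℂ) (f : V → ℂ) (w : V) :
    𝓕 (fun x => c * f x) w = c * 𝓕 f w :=
  congrFun (VectorFourier.fourierIntegral_const_smul _ _ _ f c) w

end Fourier

theorem fourier_ofReal_deriv {f : ℝ → ℝ} (hf : Integrable f) (hd : Differentiable ℝ f)
    (hf' : Integrable (deriv f)) (w : ℝ) :
    𝓕 (fun x => ((deriv f x : ℝ) : ℂ)) w = 2 * π * I * w * 𝓕 (fun x => (f x : ℂ)) w := by
  have hderiv : deriv (fun x => (f x : ℂ)) = fun x => ((deriv f x : ℝ) : ℂ) :=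
    funext fun x => (hd x).hasDerivAt.ofReal_comp.deriv
  have := Real.fourier_deriv hf.ofReal (fun x => (hd x).hasDerivAt.ofReal_comp.differentiableAt)
    (hderiv ▸ hf'.ofReal)
  rw [hderiv] at this
  exact congrFun this w

theorem fourier_comp_div {E : Type*} [NormedAddCommGroup E] [NormedSpace ℂ E]
    (h : ℝ → E) {s : ℝ} (hs : s ≠ 0) (v : ℝ) :
    𝓕 (fun x => h (x / s)) v = |s| • 𝓕 h (s * v) := by
  simp only [Real.fourier_real_eq]
  have hcomp : ∀ x : ℝ, 𝐞 (-(x * v)) • h (x / s) =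
      (fun y : ℝ => 𝐞 (-(y * (s * v))) • h y) (x / s) := fun x => by
    simp only [← mul_assoc, div_mul_cancel₀ x hs]
  simp_rw [hcomp]
  exact Measure.integral_comp_div (fun y : ℝ => 𝐞 (-(y * (s * v))) • h y) s

open ContinuousLinearMap in
theorem fourier_convolution_self_add_deriv_deriv {f : ℝ → ℝ} (hf : ContDiff ℝ 1 f)
    (hcf : HasCompactSupport f) (c w : ℝ) :
    𝓕 (fun x => ((c * (f ⋆[lsmul ℝ ℝ] f) x + deriv (deriv (f ⋆[lsmul ℝ ℝ] f)) x : ℝ) : ℂ)) w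
      = (c - 4 * π ^ 2 * w ^ 2) * 𝓕 (fun x => (f x : ℂ)) w ^ 2 := by
  have hi : Integrable f := hf.continuous.integrable_of_hasCompactSupport hcf
  have hi' : Integrable (deriv f) :=
    (hf.continuous_deriv le_rfl).integrable_of_hasCompactSupport hcf.deriv
  rw [deriv_deriv_convolution _ hcf hf hcf hf]
  push_cast
  rw [fourier_add_of_integrable ((hi.integrable_convolution _ hi).ofReal.const_mul _)
      (hi'.integrable_convolution _ hi').ofReal, fourier_const_mul,
    fourier_ofReal_convolution hi hi, fourier_ofReal_convolution hi' hi',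
    fourier_ofReal_deriv hi (hf.differentiable one_ne_zero) hi']
  linear_combination (4 * π ^ 2 * w ^ 2 : ℂ) * 𝓕 (fun x => (f x : ℂ)) w ^ 2 * I_sq

/-- For `τ > 0`, the Fourier transform of `ψ_τ` is
`ψ̂_τ(v) = 4π²(1+τ)(1 − v²)(φ̂(√(1+τ)·v))²`. -/
theorem fourier_psiAdm (τ : ℝ) (hτ : 0 < τ) (v : ℝ) :
    𝓕 (fun x : ℝ => (psiAdm τ x : ℂ)) v
      = ((4 * π ^ 2 * (1 + τ) * (1 - v ^ 2) : ℝ) : ℂ) *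
          (𝓕 (fun x : ℝ => (raisedCos x : ℂ)) (Real.sqrt (1 + τ) * v)) ^ 2 := by
  set s := Real.sqrt (1 + τ)
  have hs : 0 < s := Real.sqrt_pos.2 (by linarith)
  have hs0 : (s : ℂ) ≠ 0 := by exact_mod_cast hs.ne'
  have hs2 : (s : ℂ) ^ 2 = 1 + τ := by exact_mod_cast Real.sq_sqrt (by linarith)
  set B : ℝ → ℝ := fun y =>
    4 * π ^ 2 * (1 + τ) * raisedCosConv y + deriv (deriv raisedCosConv) y with hB
  have hpsi : (fun x => (psiAdm τ x : ℂ)) = fun x => (s⁻¹ : ℂ) * (B (x / s) : ℂ) := by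
    ext x
    simp [psiAdm, s, B]
  rw [hpsi, fourier_const_mul, fourier_comp_div (fun y => (B y : ℂ)) hs.ne', hB, raisedCosConv,
    fourier_convolution_self_add_deriv_deriv contDiff_raisedCos hasCompactSupport_raisedCos,
    abs_of_pos hs, real_smul]
  push_cast
  rw [inv_mul_cancel_left₀ hs0]
  linear_combination (-4 * π ^ 2 * v ^ 2 * 𝓕 (fun x => (raisedCos x : ℂ)) (s * v) ^ 2) * hs2
end

section
/- There is an absolute constant c > 0 such that for every τ > 0 and every x ∈ ℝ with |x| ≤ √(1+τ) one has ψ_τ(0) − ψ_τ(x) ≥ c·τ·(1+τ)^{−3/2}·x², where ψ_τ(x) = (1+τ)^{−1/2}[4π²(1+τ)(φ*φ)(x/√(1+τ)) + (φ*φ)''(x/√(1+τ))] and φ: ℝ → ℝ with φ(x) = 1 + cos(2πx) for |x| ≤ 1/2 and φ(x) = 0 otherwise. In particular 0 is the global maximum of ψ_τ. -/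
open scoped FourierTransform Real

/-! On `[0, 1]` the autocorrelation `φ * φ` is the explicit profile
`g(y) = (1 - y)(1 + cos(2πy)/2) + 3 sin(2πy)/(4π)` (`convProfile`), and it is `g(|y|)` on `[-1, 1]`
and `0` outside.
Since `g(1) = g'(1) = g''(1) = g'(0) = 0`, the even extension is twice differentiable with second
derivative `g''(|y|)` cut off at `1`. Writing `y = |x|/√(1+τ) ≤ 1`,
`√(1+τ) (ψ_τ(0) - ψ_τ(x)) = τ A(y) + (A(y) - g''(y) + g''(0))` with `A = 4π² (g(0) - g)`, and
the second summand equals `2π (2πy - sin 2πy) ≥ 0`. Finally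
`g(0) - g(y) = (1 - y)(1 - cos 2πy)/2 + 3 (2πy - sin 2πy)/(4π) ≥ 3y²/2`: the first term
dominates for `y ≤ 1/2` (as `cos u ≤ 1 - 2u²/π²` on `[-π, π]`), the second for `y ≥ 1/2`
(where `sin 2πy ≤ 0`).
-/

open Real Set MeasureTheory

theorem rpow_neg_three_halves {a : ℝ} (ha : 0 ≤ a) : a ^ (-(3 / 2 : ℝ)) = (√a ^ 3)⁻¹ := by
  rw [rpow_neg ha, sqrt_eq_rpow, ← rpow_natCast, ← rpow_mul ha]
  norm_num

theorem hasDerivAt_ite_le {f g f' g' : ℝ → ℝ} {a : ℝ} (hf : ∀ x, HasDerivAt f (f' x) x)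
    (hg : ∀ x, HasDerivAt g (g' x) x) (ha : f a = g a) (ha' : f' a = g' a) (x : ℝ) :
    HasDerivAt (fun y => if y ≤ a then f y else g y) (if x ≤ a then f' x else g' x) x := by
  rcases lt_trichotomy x a with hx | rfl | hx
  · rw [if_pos hx.le]
    refine (hf x).congr_of_eventuallyEq ?_
    filter_upwards [Iio_mem_nhds hx] with y hy
    exact if_pos (le_of_lt hy)
  · rw [if_pos le_rfl]
    have hl : HasDerivWithinAt (fun y => if y ≤ x then f y else g y) (f' x) (Iic x) x :=
      (hf x).hasDerivWithinAt.congr (fun y hy => if_pos hy) (if_pos le_rfl)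
    have hr : HasDerivWithinAt (fun y => if y ≤ x then f y else g y) (f' x) (Ici x) x := by
      rw [ha']
      refine (hg x).hasDerivWithinAt.congr (fun y hy => ?_) (by simp [ha])
      rcases (mem_Ici.1 hy).eq_or_lt with rfl | hlt
      · simp [ha]
      · exact if_neg (not_le.2 hlt)
    simpa [Iic_union_Ici] using hl.union hr
  · rw [if_neg (not_le.2 hx)]
    refine (hg x).congr_of_eventuallyEq ?_
    filter_upwards [Ioi_mem_nhds hx] with y hy
    exact if_neg (not_le.2 hy)

theorem hasDerivAt_comp_abs {f f' : ℝ → ℝ} (hf : ∀ x, HasDerivAt f (f' x) x) (h0 : f' 0 = 0)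
    (x : ℝ) : HasDerivAt (fun y => f |y|) (if x ≤ 0 then -f' (-x) else f' x) x := by
  have hneg : ∀ x, HasDerivAt (fun y => f (-y)) (-f' (-x)) x := fun x =>
    ((hf (-x)).comp x (hasDerivAt_id x).neg).congr_deriv (by ring)
  have heq : (fun y => f |y|) = fun y => if y ≤ 0 then f (-y) else f y := by
    ext y
    split_ifs with hy
    · rw [abs_of_nonpos hy]
    · rw [abs_of_pos (not_le.1 hy)]
  rw [heq]
  exact hasDerivAt_ite_le hneg hf (by simp) (by simp [h0]) x

theorem hasDerivAt_odd_ext {f f' : ℝ → ℝ} (hf : ∀ x, HasDerivAt f (f' x) x) (h0 : f 0 = 0)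
    (x : ℝ) : HasDerivAt (fun y => if y ≤ 0 then -f (-y) else f y) (f' |x|) x := by
  have hneg : ∀ x, HasDerivAt (fun y => -f (-y)) (f' (-x)) x := fun x =>
    ((hf (-x)).comp x (hasDerivAt_id x).neg).neg.congr_deriv (by ring)
  convert hasDerivAt_ite_le hneg hf (by rw [neg_zero, h0, neg_zero]) (by rw [neg_zero]) x using 1
  split_ifs with hx
  · rw [abs_of_nonpos hx]
  · rw [abs_of_pos (not_le.1 hx)]

noncomputable def cutAtOne (f : ℝ → ℝ) (t : ℝ) : ℝ := if t ≤ 1 then f t else 0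

theorem hasDerivAt_cutAtOne {f f' : ℝ → ℝ} (hf : ∀ x, HasDerivAt f (f' x) x) (h1 : f 1 = 0)
    (h1' : f' 1 = 0) (x : ℝ) : HasDerivAt (cutAtOne f) (cutAtOne f' x) x :=
  hasDerivAt_ite_le hf (fun _ => hasDerivAt_const _ 0) h1 h1' x

noncomputable def convProfile (y : ℝ) : ℝ :=
  (1 - y) * (1 + cos (2 * π * y) / 2) + 3 / (4 * π) * sin (2 * π * y)

theorem raisedCosConv_apply (x : ℝ) :
    raisedCosConv x = ∫ t, raisedCos t * raisedCos (x - t) := by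
  simp only [raisedCosConv, convolution_def, ContinuousLinearMap.lsmul_apply, smul_eq_mul]

theorem raisedCosConv_neg (x : ℝ) : raisedCosConv (-x) = raisedCosConv x := by
  have heven : ∀ᵐ t, raisedCos (-t) = raisedCos t :=
    ae_of_all _ fun t => by simp only [raisedCos, abs_neg, mul_neg, cos_neg]
  exact convolution_neg_of_neg_eq (L := ContinuousLinearMap.lsmul ℝ ℝ) heven heven

theorem raisedCosConv_eq_zero_of_one_lt {x : ℝ} (hx : 1 < x) : raisedCosConv x = 0 := by
  have hzero : ∀ t, raisedCos t * raisedCos (x - t) = 0 := fun t => by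
    by_cases ht : |t| ≤ 1 / 2
    · have : ¬ |x - t| ≤ 1 / 2 := fun h => by
        linarith [(abs_le.1 ht).2, (abs_le.1 h).2]
      simp only [raisedCos, if_neg this, mul_zero]
    · simp only [raisedCos, if_neg ht, zero_mul]
  simp [raisedCosConv_apply, hzero]

theorem raisedCos_mul_raisedCos_sub {x : ℝ} (hx : 0 ≤ x) (t : ℝ) :
    raisedCos t * raisedCos (x - t) =
      (Icc (x - 1 / 2) (1 / 2)).indicator
        (fun t => (1 + cos (2 * π * t)) * (1 + cos (2 * π * (x - t)))) t := by
  by_cases ht : t ∈ Icc (x - 1 / 2) (1 / 2)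
  · have h1 : |t| ≤ 1 / 2 := abs_le.2 ⟨by linarith [ht.1], ht.2⟩
    have h2 : |x - t| ≤ 1 / 2 := abs_le.2 ⟨by linarith [ht.2], by linarith [ht.1]⟩
    simp only [raisedCos, indicator_of_mem ht, if_pos h1, if_pos h2]
  · rw [indicator_of_notMem ht]
    rcases not_and_or.1 ht with ht | ht
    · have : ¬ |x - t| ≤ 1 / 2 := fun h => ht (by linarith [(abs_le.1 h).2])
      simp only [raisedCos, if_neg this, mul_zero]
    · have : ¬ |t| ≤ 1 / 2 := fun h => ht (abs_le.1 h).2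
      simp only [raisedCos, if_neg this, zero_mul]

theorem hasDerivAt_raisedCos_mul_primitive (x t : ℝ) :
    HasDerivAt (fun t => t + sin (2 * π * t) / (2 * π) - sin (2 * π * (x - t)) / (2 * π)
        + t * cos (2 * π * x) / 2 + sin (2 * π * (2 * t - x)) / (8 * π))
      ((1 + cos (2 * π * t)) * (1 + cos (2 * π * (x - t)))) t := by
  have hlin : ∀ {g : ℝ → ℝ} {a : ℝ}, HasDerivAt g a t →
      HasDerivAt (fun t => sin (2 * π * g t)) (cos (2 * π * g t) * (2 * π * a)) t :=
    fun hg => (hg.const_mul (2 * π)).sin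
  have h := ((((hasDerivAt_id t).add ((hlin (hasDerivAt_id t)).div_const (2 * π))).sub
      ((hlin ((hasDerivAt_const t x).sub (hasDerivAt_id t))).div_const (2 * π))).add
      (((hasDerivAt_id t).mul_const (cos (2 * π * x))).div_const 2)).add
      ((hlin (((hasDerivAt_id t).const_mul 2).sub (hasDerivAt_const t x))).div_const (8 * π))
  refine h.congr_deriv ?_
  have hπ : π ≠ 0 := pi_ne_zero
  simp only [id, Pi.sub_apply]
  rw [show 2 * π * (x - t) = 2 * π * x - 2 * π * t by ring,
    show 2 * π * (2 * t - x) = 2 * π * t - (2 * π * x - 2 * π * t) by ring]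
  simp only [cos_sub, sin_sub]
  field_simp
  linear_combination (-8 * cos (2 * π * x)) * sin_sq_add_cos_sq (2 * π * t)

theorem raisedCosConv_eq_convProfile {x : ℝ} (hx0 : 0 ≤ x) (hx1 : x ≤ 1) :
    raisedCosConv x = convProfile x := by
  rw [raisedCosConv_apply, integral_congr_ae (.of_forall (raisedCos_mul_raisedCos_sub hx0)),
    integral_indicator measurableSet_Icc, integral_Icc_eq_integral_Ioc,
    ← intervalIntegral.integral_of_le (by linarith),
    intervalIntegral.integral_eq_sub_of_hasDerivAt
      (fun t _ => hasDerivAt_raisedCos_mul_primitive x t)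
      (Continuous.intervalIntegrable (by fun_prop) _ _)]
  have hπ : π ≠ 0 := pi_ne_zero
  rw [show 2 * π * (1 / 2 : ℝ) = π by ring,
    show 2 * π * (x - 1 / 2) = 2 * π * x - π by ring,
    show 2 * π * (x - (x - 1 / 2)) = π by ring,
    show 2 * π * (2 * (1 / 2) - x) = 2 * π - 2 * π * x by ring,
    show 2 * π * (2 * (x - 1 / 2) - x) = 2 * π * x - 2 * π by ring,
    sin_sub, sin_sub, sin_sub]
  simp only [sin_two_pi, cos_two_pi, sin_pi, cos_pi, convProfile]
  field_simp
  ring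

noncomputable def convProfileDeriv (y : ℝ) : ℝ :=
  -1 + cos (2 * π * y) - π * (1 - y) * sin (2 * π * y)

noncomputable def convProfileDeriv2 (y : ℝ) : ℝ :=
  -π * sin (2 * π * y) - 2 * π ^ 2 * (1 - y) * cos (2 * π * y)

theorem hasDerivAt_two_pi_mul (x : ℝ) : HasDerivAt (fun y => 2 * π * y) (2 * π) x := by
  simpa using (hasDerivAt_id x).const_mul (2 * π)

theorem hasDerivAt_convProfile (x : ℝ) : HasDerivAt convProfile (convProfileDeriv x) x := by
  have h := (((hasDerivAt_const x (1 : ℝ)).sub (hasDerivAt_id x)).mul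
      ((hasDerivAt_const x (1 : ℝ)).add (((hasDerivAt_two_pi_mul x).cos).div_const 2))).add
      (((hasDerivAt_two_pi_mul x).sin).const_mul (3 / (4 * π)))
  refine h.congr_deriv ?_
  have hπ : π ≠ 0 := pi_ne_zero
  simp only [convProfileDeriv, Pi.sub_apply, Pi.add_apply, id]
  field_simp
  ring

theorem hasDerivAt_convProfileDeriv (x : ℝ) :
    HasDerivAt convProfileDeriv (convProfileDeriv2 x) x := by
  have h := ((hasDerivAt_const x (-1 : ℝ)).add (hasDerivAt_two_pi_mul x).cos).sub
      (((hasDerivAt_const x π).mul ((hasDerivAt_const x (1 : ℝ)).sub (hasDerivAt_id x))).mul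
        (hasDerivAt_two_pi_mul x).sin)
  refine h.congr_deriv ?_
  simp only [convProfileDeriv2, Pi.mul_apply, Pi.sub_apply, id]
  ring

theorem raisedCosConv_eq_cutAtOne_abs (x : ℝ) :
    raisedCosConv x = cutAtOne convProfile |x| := by
  have habs : raisedCosConv x = raisedCosConv |x| := by
    rcases abs_choice x with h | h <;> rw [h]
    exact (raisedCosConv_neg x).symm
  rw [habs, cutAtOne]
  split_ifs with h
  · exact raisedCosConv_eq_convProfile (abs_nonneg x) h
  · exact raisedCosConv_eq_zero_of_one_lt (not_le.1 h)

theorem deriv_deriv_raisedCosConv (x : ℝ) :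
    deriv (deriv raisedCosConv) x = cutAtOne convProfileDeriv2 |x| := by
  have h1 : ∀ t, HasDerivAt (cutAtOne convProfile) (cutAtOne convProfileDeriv t) t :=
    hasDerivAt_cutAtOne hasDerivAt_convProfile (by simp [convProfile]) (by simp [convProfileDeriv])
  have h2 : ∀ t, HasDerivAt (cutAtOne convProfileDeriv) (cutAtOne convProfileDeriv2 t) t :=
    hasDerivAt_cutAtOne hasDerivAt_convProfileDeriv (by simp [convProfileDeriv])
      (by simp [convProfileDeriv2])
  have h0 : cutAtOne convProfileDeriv 0 = 0 := by simp [cutAtOne, convProfileDeriv]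
  have hderiv : deriv raisedCosConv = fun y =>
      if y ≤ 0 then -cutAtOne convProfileDeriv (-y) else cutAtOne convProfileDeriv y := by
    ext y
    rw [funext raisedCosConv_eq_cutAtOne_abs]
    exact (hasDerivAt_comp_abs h1 h0 y).deriv
  rw [hderiv]
  exact (hasDerivAt_odd_ext h2 h0 x).deriv

theorem convProfile_zero_sub (y : ℝ) :
    convProfile 0 - convProfile y =
      (1 - y) * (1 - cos (2 * π * y)) / 2 + 3 / (4 * π) * (2 * π * y - sin (2 * π * y)) := by
  have hπ : π ≠ 0 := pi_ne_zero
  simp only [convProfile, mul_zero, cos_zero, sin_zero]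
  field_simp
  ring

theorem sq_le_convProfile_zero_sub {y : ℝ} (hy0 : 0 ≤ y) (hy1 : y ≤ 1) :
    3 / 2 * y ^ 2 ≤ convProfile 0 - convProfile y := by
  have hπ : 0 < π := pi_pos
  have hsin : sin (2 * π * y) ≤ 2 * π * y := sin_le (by positivity)
  rw [convProfile_zero_sub]
  rcases le_total y (1 / 2) with hy | hy
  · have hcos : cos (2 * π * y) ≤ 1 - 2 / π ^ 2 * (2 * π * y) ^ 2 :=
      cos_le_one_sub_mul_cos_sq (by rw [abs_of_nonneg (by positivity)]; nlinarith)
    have hcos' : 8 * y ^ 2 ≤ 1 - cos (2 * π * y) := by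
      field_simp at hcos
      nlinarith
    have : 0 ≤ 3 / (4 * π) * (2 * π * y - sin (2 * π * y)) :=
      mul_nonneg (by positivity) (by linarith)
    nlinarith
  · have hsin' : sin (2 * π * y) ≤ 0 := by
      rw [← sin_sub_two_pi]
      exact sin_nonpos_of_nonpos_of_neg_pi_le (by nlinarith) (by nlinarith)
    have : 0 ≤ (1 - y) * (1 - cos (2 * π * y)) / 2 :=
      div_nonneg (mul_nonneg (by linarith) (by linarith [cos_le_one (2 * π * y)])) zero_le_two
    have : 3 / 2 * y ≤ 3 / (4 * π) * (2 * π * y - sin (2 * π * y)) := by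
      rw [mul_sub, show 3 / (4 * π) * (2 * π * y) = 3 / 2 * y by field_simp; ring]
      nlinarith [mul_nonpos_of_nonneg_of_nonpos (by positivity : 0 ≤ 3 / (4 * π)) hsin']
    nlinarith

theorem convProfileDeriv2_sub_le {y : ℝ} (hy : 0 ≤ y) :
    convProfileDeriv2 y - convProfileDeriv2 0 ≤ 4 * π ^ 2 * (convProfile 0 - convProfile y) := by
  have hπ : 0 < π := pi_pos
  have hsin : sin (2 * π * y) ≤ 2 * π * y := sin_le (by positivity)
  have hgap : 4 * π ^ 2 * (convProfile 0 - convProfile y)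
      - (convProfileDeriv2 y - convProfileDeriv2 0) = 2 * π * (2 * π * y - sin (2 * π * y)) := by
    rw [convProfile_zero_sub]
    simp only [convProfileDeriv2, mul_zero, sin_zero, cos_zero]
    field_simp
    ring
  nlinarith

theorem psiAdm_eq (τ x : ℝ) :
    psiAdm τ x = (√(1 + τ))⁻¹ * (4 * π ^ 2 * (1 + τ) * cutAtOne convProfile (|x| / √(1 + τ))
      + cutAtOne convProfileDeriv2 (|x| / √(1 + τ))) := by
  rw [psiAdm, deriv_deriv_raisedCosConv, raisedCosConv_eq_cutAtOne_abs, abs_div,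
    abs_of_nonneg (sqrt_nonneg _)]

theorem psiAdm_zero (τ : ℝ) : psiAdm τ 0 = (√(1 + τ))⁻¹ * (2 * π ^ 2 * (2 + 3 * τ)) := by
  simp only [psiAdm_eq, abs_zero, zero_div, cutAtOne, zero_le_one, if_true, convProfile,
    convProfileDeriv2, mul_zero, cos_zero, sin_zero]
  ring

theorem psiAdm_eq_zero {τ x : ℝ} (hτ : -1 < τ) (hx : √(1 + τ) < |x|) : psiAdm τ x = 0 := by
  have hs : 0 < √(1 + τ) := sqrt_pos.2 (by linarith)
  have hy : ¬ |x| / √(1 + τ) ≤ 1 := not_le.2 ((one_lt_div hs).2 hx)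
  simp only [psiAdm_eq, cutAtOne, if_neg hy, mul_zero, add_zero]

theorem psiAdm_zero_sub_ge {τ x : ℝ} (hτ : 0 < τ) (hx : |x| ≤ √(1 + τ)) :
    6 * π ^ 2 * τ * (1 + τ) ^ (-(3 / 2 : ℝ)) * x ^ 2 ≤ psiAdm τ 0 - psiAdm τ x := by
  set s := √(1 + τ) with hs_def
  set y := |x| / s
  have hs : 0 < s := sqrt_pos.2 (by linarith)
  have hy0 : 0 ≤ y := by positivity
  have hy1 : y ≤ 1 := (div_le_one hs).2 hx
  have hx2 : x ^ 2 = s ^ 2 * y ^ 2 := by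
    rw [div_pow, sq_abs, mul_div_cancel₀ _ (by positivity)]
  have hA := mul_le_mul_of_nonneg_left (sq_le_convProfile_zero_sub hy0 hy1)
    (by positivity : 0 ≤ τ * (4 * π ^ 2))
  have hB := convProfileDeriv2_sub_le hy0
  calc 6 * π ^ 2 * τ * (1 + τ) ^ (-(3 / 2 : ℝ)) * x ^ 2
      = s⁻¹ * (τ * (4 * π ^ 2) * (3 / 2 * y ^ 2)) := by
        rw [rpow_neg_three_halves (by linarith), hx2]
        field_simp
        ring
    _ ≤ s⁻¹ * (τ * (4 * π ^ 2) * (convProfile 0 - convProfile y)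
          + (4 * π ^ 2 * (convProfile 0 - convProfile y)
            - (convProfileDeriv2 y - convProfileDeriv2 0))) := by
        gcongr
        linarith
    _ = psiAdm τ 0 - psiAdm τ x := by
        rw [psiAdm_eq, psiAdm_eq, ← hs_def, abs_zero, zero_div, show |x| / s = y from rfl]
        simp only [cutAtOne, zero_le_one, hy1, if_true]
        have : (s ^ 2 : ℝ) = 1 + τ := sq_sqrt (by linarith)
        ring

/-- There is an absolute constant `c > 0` such that for every `τ > 0` and every
`x` with `|x| ≤ √(1+τ)` one has `ψ_τ(0) − ψ_τ(x) ≥ c·τ·(1+τ)^{−3/2}·x²`. In particular `0` is the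
global maximum of `ψ_τ`. -/
theorem psiAdm_quadratic_decay :
    (∃ c : ℝ, 0 < c ∧ ∀ τ : ℝ, 0 < τ → ∀ x : ℝ, |x| ≤ Real.sqrt (1 + τ) →
      c * τ * (1 + τ) ^ (-(3/2 : ℝ)) * x ^ 2 ≤ psiAdm τ 0 - psiAdm τ x) ∧
    (∀ τ : ℝ, 0 < τ → ∀ x : ℝ, psiAdm τ x ≤ psiAdm τ 0) := by
  refine ⟨⟨6 * π ^ 2, by positivity, fun τ hτ x hx => psiAdm_zero_sub_ge hτ hx⟩, fun τ hτ x => ?_⟩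
  rcases le_or_gt |x| √(1 + τ) with hx | hx
  · have hdecay := psiAdm_zero_sub_ge hτ hx
    have hnonneg : 0 ≤ 6 * π ^ 2 * τ * (1 + τ) ^ (-(3 / 2 : ℝ)) * x ^ 2 := by positivity
    linarith
  · rw [psiAdm_eq_zero (by linarith) hx, psiAdm_zero]
    positivity
end
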